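/- arXiv:2401.16097 — 2 statements merged into one kernel-verified Lean document; each statement's English description precedes it below -/
import Mathlib

section
/- Let WN = (P,T,F,i,o) be a sound acyclic free-choice workflow net (AFW-net). For every pair (x,y) ∈ ∥ and every node s ∈ y•: there is no acyclic path from x to s if and only if (x,s) ∈ ∥. -/
/-- A Petri net: finite disjoint sets of places and transitions and a flow relation
`F ⊆ (P × T) ∪ (T × P)`. -/
structure PetriNet (α : Type) [DecidableEq α] where
  places : Finset α
  transitions : Finset α
  flow : Finset (α × α)
  disjoint_pt : Disjoint places transitions
  flow_mem : ∀ e ∈ flow,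
    (e.1 ∈ places ∧ e.2 ∈ transitions) ∨ (e.1 ∈ transitions ∧ e.2 ∈ places)

namespace PetriNet

variable {α : Type} [DecidableEq α]

/-- All nodes `P ∪ T` of the net. -/
def nodes (N : PetriNet α) : Finset α := N.places ∪ N.transitions

/-- The preset `•x` of a node. -/
def preset (N : PetriNet α) (x : α) : Finset α :=
  N.nodes.filter (fun p => (p, x) ∈ N.flow)

/-- The postset `x•` of a node. -/
def postset (N : PetriNet α) (x : α) : Finset α :=
  N.nodes.filter (fun s => (x, s) ∈ N.flow)

/-- A path: a nonempty sequence of nodes, each consecutive pair related by the flow. -/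
def IsPath (N : PetriNet α) (w : List α) : Prop :=
  w ≠ [] ∧ (∀ x ∈ w, x ∈ N.nodes) ∧ w.Chain' (fun a b => (a, b) ∈ N.flow)

/-- An acyclic path: a path whose nodes are pairwise distinct. -/
def IsAcyclicPath (N : PetriNet α) (w : List α) : Prop :=
  N.IsPath w ∧ w.Nodup

/-- There is an acyclic path from `x` to `y`. -/
def HasAcyclicPath (N : PetriNet α) (x y : α) : Prop :=
  ∃ w, N.IsAcyclicPath w ∧ w.head? = some x ∧ w.getLast? = some y

/-- `HasPath(x)`: the set of all nodes to which `x` has an acyclic path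
(including `x` itself, via the trivial path `(x)` when `x` is a node). -/
def HasPathSet (N : PetriNet α) (x : α) : Set α := {y | N.HasAcyclicPath x y}

/-- A net is acyclic iff no node has a nontrivial path to itself. -/
def Acyclic (N : PetriNet α) : Prop :=
  ∀ x, ¬ ∃ w, N.IsPath w ∧ 2 ≤ w.length ∧ w.head? = some x ∧ w.getLast? = some x

/-- A transition `t` is enabled in marking `M` iff all its input places carry a token. -/
def Enabled (N : PetriNet α) (M : α → ℕ) (t : α) : Prop :=
  t ∈ N.transitions ∧ ∀ p ∈ N.preset t, 1 ≤ M p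

/-- Firing `t` consumes one token from each input place and produces one on each output place. -/
def fire (N : PetriNet α) (M : α → ℕ) (t : α) : α → ℕ := fun p =>
  (M p - (if p ∈ N.preset t then 1 else 0)) + (if p ∈ N.postset t then 1 else 0)

/-- A step `M —t→ M'`. -/
def Step (N : PetriNet α) (M : α → ℕ) (t : α) (M' : α → ℕ) : Prop :=
  N.Enabled M t ∧ M' = N.fire M t

/-- Reachability via finite occurrence sequences. -/
def Reachable (N : PetriNet α) : (α → ℕ) → (α → ℕ) → Prop :=
  Relation.ReflTransGen (fun M M' => ∃ t, N.Step M t M')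

/-- Liveness with respect to an initial marking. -/
def Live (N : PetriNet α) (M₀ : α → ℕ) : Prop :=
  ∀ M, N.Reachable M₀ M → ∀ t ∈ N.transitions, ∃ M', N.Reachable M M' ∧ N.Enabled M' t

/-- Boundedness with respect to an initial marking. -/
def Bounded (N : PetriNet α) (M₀ : α → ℕ) : Prop :=
  ∃ n : ℕ, ∀ M, N.Reachable M₀ M → ∀ p ∈ N.places, M p ≤ n

/-- Free-choice: every place with more than one output transition is the unique
input of each of those transitions. -/
def FreeChoice (N : PetriNet α) : Prop :=
  ∀ p ∈ N.places, 1 < (N.postset p).card → ∀ t ∈ N.postset p, N.preset t = {p}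

/-- A node is active in `M` iff it is a place carrying a token or an enabled transition. -/
def Active (N : PetriNet α) (x : α) (M : α → ℕ) : Prop :=
  (x ∈ N.places ∧ 1 ≤ M x) ∨ (x ∈ N.transitions ∧ N.Enabled M x)

/-- One unfolding of the defining clauses of the concurrency relation. -/
def concStep (N : PetriNet α) (M₀ : α → ℕ) (R : Set (α × α)) : Set (α × α) :=
  {q | q.1 ≠ q.2 ∧
    (∃ M, N.Reachable M₀ M ∧ N.Active q.1 M ∧ N.Active q.2 M) ∧
    (q.1 ∈ N.transitions → q.2 ∈ N.places → ∀ z ∈ N.preset q.1, (z, q.2) ∈ R) ∧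
    (q.1 ∈ N.places → q.2 ∈ N.transitions → ∀ z ∈ N.preset q.2, (z, q.1) ∈ R) ∧
    (q.1 ∈ N.transitions → q.2 ∈ N.transitions →
      ∀ z ∈ N.preset q.1, ∀ z' ∈ N.preset q.2, (z, z') ∈ R)}

/-- The concurrency relation `∥`: the greatest relation consistent with its
defining clauses (Def. of concurrency). -/
def Concurrent (N : PetriNet α) (M₀ : α → ℕ) : Set (α × α) :=
  ⋃₀ {R | R ⊆ N.concStep M₀ R}

/-- The number of places on `w` carrying at least one token in `M`. -/
def tokensOn (N : PetriNet α) (M : α → ℕ) (w : List α) : ℕ :=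
  (w.toFinset.filter (fun p => p ∈ N.places ∧ 1 ≤ M p)).card

end PetriNet

/-- A workflow net: a Petri net with a source place `i` (`•i = ∅`), a sink place `o`
(`o• = ∅`), and every node on a path from `i` to `o`. -/
structure WorkflowNet (α : Type) [DecidableEq α] extends PetriNet α where
  source : α
  sink : α
  source_mem : source ∈ places
  sink_mem : sink ∈ places
  source_no_pre : toPetriNet.preset source = ∅
  sink_no_post : toPetriNet.postset sink = ∅
  all_on_path : ∀ x ∈ toPetriNet.nodes, ∃ w, toPetriNet.IsPath w ∧
    w.head? = some source ∧ w.getLast? = some sink ∧ x ∈ w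

namespace WorkflowNet

variable {α : Type} [DecidableEq α]

/-- The initial marking: one token on the source, none elsewhere. -/
def initialMarking (W : WorkflowNet α) : α → ℕ := fun p => if p = W.source then 1 else 0

/-- The terminal marking: one token on the sink, none elsewhere. -/
def terminalMarking (W : WorkflowNet α) : α → ℕ := fun p => if p = W.sink then 1 else 0

/-- Soundness of a workflow net. -/
def Sound (W : WorkflowNet α) : Prop :=
  (∀ M, W.toPetriNet.Reachable W.initialMarking M →
    W.toPetriNet.Reachable M W.terminalMarking ∧ (1 ≤ M W.sink → M = W.terminalMarking)) ∧
  (∀ t ∈ W.transitions, ∃ M M', W.toPetriNet.Reachable W.initialMarking M ∧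
    W.toPetriNet.Step M t M')

end WorkflowNet

/-!
The heart of the argument is an invariant of sound acyclic free-choice workflow nets: every
reachable marking puts at most one token on a place, and never marks two places that lie on a
common path. It is proved by induction along the flow. If `p` and a place `q` downstream of `p`
are both marked, then an output transition `t` of `p` can fire while `q` keeps its token: either
`•t = {p}`, or by free choice `t` is the only consumer of `p`, and soundness yields a run to the
terminal marking that fires `t`; deleting from that run every transition downstream of `q` leaves
a run that still enables `t` and never consumes `q`. Firing `t` then marks a place strictly
downstream of `p` that reaches `q` (or puts a second token on `q`), against the induction
hypothesis. Two tokens on `p` are excluded in the same way: firing an output transition of `p`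
leaves a token on `p` and marks a place downstream of it.

Concurrent nodes have their input places marked together, so the invariant forbids a path
between them. Conversely, let `x ∥ y`, `s ∈ y•`, and `s` not reachable from `x`. If `y` is a
transition, fire it. If `y` is a place, either `s` is already enabled, or `s` is the only
consumer of `y`, and the same surgery on a terminating run enables `s` while keeping `x` active.
-/
namespace PetriNet

variable {α : Type} [DecidableEq α] {N : PetriNet α}

def Reaches (N : PetriNet α) (a b : α) : Prop :=
  Relation.ReflTransGen (fun u v => (u, v) ∈ N.flow) a b

theorem notMem_transitions_of_mem_places {p : α} (hp : p ∈ N.places) : p ∉ N.transitions :=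
  Finset.disjoint_left.mp N.disjoint_pt hp

theorem flow_target_mem_transitions {a b : α} (h : (a, b) ∈ N.flow) (ha : a ∈ N.places) :
    b ∈ N.transitions := by
  rcases N.flow_mem _ h with ⟨_, hb⟩ | ⟨ha', _⟩
  · exact hb
  · exact absurd ha' (notMem_transitions_of_mem_places ha)

theorem flow_target_mem_places {a b : α} (h : (a, b) ∈ N.flow) (ha : a ∈ N.transitions) :
    b ∈ N.places := by
  rcases N.flow_mem _ h with ⟨ha', _⟩ | ⟨_, hb⟩
  · exact absurd ha (notMem_transitions_of_mem_places ha')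
  · exact hb

theorem flow_source_mem_places {a b : α} (h : (a, b) ∈ N.flow) (hb : b ∈ N.transitions) :
    a ∈ N.places := by
  rcases N.flow_mem _ h with ⟨ha, _⟩ | ⟨_, hb'⟩
  · exact ha
  · exact absurd hb (notMem_transitions_of_mem_places hb')

theorem flow_source_mem_nodes {a b : α} (h : (a, b) ∈ N.flow) : a ∈ N.nodes := by
  rcases N.flow_mem _ h with ⟨ha, _⟩ | ⟨ha, _⟩ <;> simp [nodes, ha]

theorem flow_target_mem_nodes {a b : α} (h : (a, b) ∈ N.flow) : b ∈ N.nodes := by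
  rcases N.flow_mem _ h with ⟨_, hb⟩ | ⟨_, hb⟩ <;> simp [nodes, hb]

theorem mem_preset {z x : α} : z ∈ N.preset x ↔ (z, x) ∈ N.flow := by
  simpa [preset] using flow_source_mem_nodes

theorem mem_postset {z x : α} : z ∈ N.postset x ↔ (x, z) ∈ N.flow := by
  simpa [postset] using flow_target_mem_nodes

theorem HasAcyclicPath.reaches {a b : α} (h : N.HasAcyclicPath a b) : N.Reaches a b := by
  obtain ⟨w, ⟨⟨hne, -, hchain⟩, -⟩, hhead, hlast⟩ := h
  obtain rfl : w.head hne = a := by simpa [List.head?_eq_some_head hne] using hhead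
  obtain rfl : w.getLast hne = b := by simpa [List.getLast?_eq_some_getLast hne] using hlast
  exact List.relationReflTransGen_of_exists_isChain w hchain hne

theorem hasAcyclicPath_of_reaches {a b : α} (h : N.Reaches a b) (ha : a ∈ N.nodes) :
    N.HasAcyclicPath a b := by
  induction h using Relation.ReflTransGen.head_induction_on with
  | refl => exact ⟨[b], ⟨⟨by simp, by simpa using ha, List.isChain_singleton _⟩, by simp⟩, rfl, rfl⟩
  | @head a c hac _ ih =>
    obtain ⟨w, ⟨⟨hne, hmem, hchain⟩, hnodup⟩, hhead, hlast⟩ := ih (flow_target_mem_nodes hac)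
    by_cases haw : a ∈ w
    · obtain ⟨w₁, w₂, rfl⟩ := List.append_of_mem haw
      refine ⟨a :: w₂, ⟨⟨by simp, fun x hx => hmem x (by simp_all), ?_⟩, ?_⟩, rfl, ?_⟩
      · exact hchain.suffix ⟨w₁, rfl⟩
      · exact hnodup.sublist (List.sublist_append_right _ _)
      · rwa [List.getLast?_append_of_ne_nil _ (by simp)] at hlast
    · obtain ⟨d, w', rfl⟩ := List.exists_cons_of_ne_nil hne
      obtain rfl : d = c := by simpa using hhead
      refine ⟨a :: d :: w', ⟨⟨by simp, ?_, List.isChain_cons_cons.2 ⟨hac, hchain⟩⟩,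
        List.nodup_cons.2 ⟨haw, hnodup⟩⟩, rfl, by simpa using hlast⟩
      intro x hx
      rcases List.mem_cons.1 hx with rfl | hx
      exacts [flow_source_mem_nodes hac, hmem x hx]

theorem hasAcyclicPath_iff_reaches {a b : α} (ha : a ∈ N.nodes) :
    N.HasAcyclicPath a b ↔ N.Reaches a b :=
  ⟨HasAcyclicPath.reaches, fun h => hasAcyclicPath_of_reaches h ha⟩

theorem Acyclic.not_reaches_of_flow (hacyc : N.Acyclic) {a b : α} (hab : (a, b) ∈ N.flow) :
    ¬ N.Reaches b a := by
  intro hba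
  obtain ⟨w, ⟨⟨hne, hmem, hchain⟩, -⟩, hhead, hlast⟩ :=
    hasAcyclicPath_of_reaches hba (flow_target_mem_nodes hab)
  obtain ⟨c, w', rfl⟩ := List.exists_cons_of_ne_nil hne
  obtain rfl : c = b := by simpa using hhead
  refine hacyc a ⟨a :: c :: w', ⟨by simp, ?_, List.isChain_cons_cons.2 ⟨hab, hchain⟩⟩,
    by simp, rfl, by simpa using hlast⟩
  intro x hx
  rcases List.mem_cons.1 hx with rfl | hx
  exacts [flow_source_mem_nodes hab, hmem x hx]

theorem Acyclic.reaches_antisymm (hacyc : N.Acyclic) {a b : α} (hab : N.Reaches a b)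
    (hba : N.Reaches b a) : a = b := by
  rcases hab.cases_head with rfl | ⟨c, hac, hcb⟩
  · rfl
  · exact absurd (hcb.trans hba) (hacyc.not_reaches_of_flow hac)

theorem Acyclic.notMem_postset_of_mem_preset (hacyc : N.Acyclic) {p t : α}
    (hp : p ∈ N.preset t) : p ∉ N.postset t :=
  fun hp' => hacyc.not_reaches_of_flow (mem_preset.1 hp) (.single (mem_postset.1 hp'))

/-- The measure is the number of nodes reachable from `p`, which drops strictly along a flow
edge of an acyclic net. -/
theorem Acyclic.induction (hacyc : N.Acyclic) {P : α → Prop}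
    (step : ∀ p, (∀ r, N.Reaches p r → r ≠ p → P r) → P p) (p : α) : P p := by
  classical
  induction hn : (N.nodes.filter (N.Reaches p ·)).card using Nat.strong_induction_on
    generalizing p with
  | _ n ih =>
  refine step p fun r hpr hrp => ih _ ?_ r rfl
  subst hn
  refine Finset.card_lt_card ⟨fun u hu => ?_, fun hsub => ?_⟩
  · simp only [Finset.mem_filter] at hu ⊢
    exact ⟨hu.1, hpr.trans hu.2⟩
  · have hp : p ∈ N.nodes := by
      rcases hpr.cases_head with rfl | ⟨c, hpc, -⟩
      exacts [absurd rfl hrp, flow_source_mem_nodes hpc]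
    have := (Finset.mem_filter.1 (hsub (Finset.mem_filter.2 ⟨hp, .refl⟩))).2
    exact hrp (hacyc.reaches_antisymm hpr this).symm

theorem le_fire_of_notMem_preset {M : α → ℕ} {t p : α} (hp : p ∉ N.preset t) :
    M p ≤ N.fire M t p := by
  simp [fire, hp]

theorem fire_of_mem_postset {M : α → ℕ} {t p : α} (hpre : p ∉ N.preset t)
    (hpost : p ∈ N.postset t) : N.fire M t p = M p + 1 := by
  simp [fire, hpre, hpost]

theorem fire_of_mem_preset {M : α → ℕ} {t p : α} (hpre : p ∈ N.preset t)
    (hpost : p ∉ N.postset t) : N.fire M t p = M p - 1 := by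
  simp [fire, hpre, hpost]

theorem fire_of_notMem_places {M : α → ℕ} {t p : α} (ht : t ∈ N.transitions)
    (hp : p ∉ N.places) : N.fire M t p = M p := by
  have hpre : p ∉ N.preset t := fun h => hp (flow_source_mem_places (mem_preset.1 h) ht)
  have hpost : p ∉ N.postset t := fun h => hp (flow_target_mem_places (mem_postset.1 h) ht)
  simp [fire, hpre, hpost]

theorem Enabled.mono {M M' : α → ℕ} {t : α} (h : N.Enabled M t)
    (hle : ∀ p ∈ N.preset t, M p ≤ M' p) : N.Enabled M' t :=
  ⟨h.1, fun p hp => (h.2 p hp).trans (hle p hp)⟩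

theorem enabled_of_preset_eq_singleton {M : α → ℕ} {t p : α} (ht : t ∈ N.transitions)
    (hpre : N.preset t = {p}) (hp : 1 ≤ M p) : N.Enabled M t :=
  ⟨ht, fun z hz => by
    obtain rfl : z = p := by simpa [hpre] using hz
    exact hp⟩

theorem Reachable.mem_places_of_pos {M₀ M : α → ℕ} (hM₀ : ∀ p ∉ N.places, M₀ p = 0)
    (h : N.Reachable M₀ M) {p : α} (hp : 1 ≤ M p) : p ∈ N.places := by
  have hzero : ∀ p ∉ N.places, M p = 0 := by
    clear hp
    induction h with
    | refl => exact hM₀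
    | tail _ hstep ih =>
      obtain ⟨t, hen, rfl⟩ := hstep
      intro p hp
      rw [fire_of_notMem_places hen.1 hp, ih p hp]
  by_contra hpP
  exact absurd (hzero p hpP) (by omega)

theorem FreeChoice.preset_eq_or_postset_unique (hfc : N.FreeChoice) {p t : α}
    (hp : p ∈ N.places) (ht : t ∈ N.postset p) :
    N.preset t = {p} ∨ ∀ u ∈ N.postset p, u = t := by
  by_contra! h
  obtain ⟨hpre, u, hu, hut⟩ := h
  exact hpre (hfc p hp (Finset.one_lt_card.2 ⟨u, hu, t, ht, hut⟩) t ht)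

inductive FireSeq (N : PetriNet α) : (α → ℕ) → List α → (α → ℕ) → Prop
  | nil (M : α → ℕ) : N.FireSeq M [] M
  | cons {M M' M'' : α → ℕ} {t : α} {σ : List α} :
      N.Step M t M' → N.FireSeq M' σ M'' → N.FireSeq M (t :: σ) M''

theorem FireSeq.reachable {M M' : α → ℕ} {σ : List α} (h : N.FireSeq M σ M') :
    N.Reachable M M' := by
  induction h with
  | nil => exact .refl
  | cons hstep _ ih => exact .head ⟨_, hstep⟩ ih

theorem Reachable.exists_fireSeq {M M' : α → ℕ} (h : N.Reachable M M') :
    ∃ σ, N.FireSeq M σ M' := by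
  induction h using Relation.ReflTransGen.head_induction_on with
  | refl => exact ⟨[], .nil _⟩
  | head hstep _ ih =>
    obtain ⟨t, hstep⟩ := hstep
    obtain ⟨σ, hσ⟩ := ih
    exact ⟨t :: σ, .cons hstep hσ⟩

theorem FireSeq.le_of_forall_notMem_preset {M M' : α → ℕ} {σ : List α} {q : α}
    (h : N.FireSeq M σ M') (hσ : ∀ u ∈ σ, q ∉ N.preset u) : M q ≤ M' q := by
  induction h with
  | nil => exact le_rfl
  | cons hstep _ ih =>
    obtain ⟨-, rfl⟩ := hstep
    exact (le_fire_of_notMem_preset (hσ _ List.mem_cons_self)).trans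
      (ih fun u hu => hσ u (List.mem_cons_of_mem _ hu))

theorem FireSeq.exists_prefix_enabled_consumer {M M' : α → ℕ} {σ : List α} {q : α}
    (h : N.FireSeq M σ M') (hlt : M' q < M q) :
    ∃ σ₁ Ma t, N.FireSeq M σ₁ Ma ∧ (∀ u ∈ σ₁, q ∉ N.preset u) ∧ q ∈ N.preset t ∧
      N.Enabled Ma t := by
  induction h with
  | nil => omega
  | @cons M M₁ _ t _ hstep _ ih =>
    by_cases hq : q ∈ N.preset t
    · exact ⟨[], M, t, .nil M, by simp, hq, hstep.1⟩
    · have hle : M q ≤ M₁ q := hstep.2 ▸ le_fire_of_notMem_preset hq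
      obtain ⟨σ₁, Ma, u, hσ₁, hnc, hu, hen⟩ := ih (by omega)
      refine ⟨t :: σ₁, Ma, u, .cons hstep hσ₁, ?_, hu, hen⟩
      rintro v (_ | ⟨_, hv⟩)
      exacts [hq, hnc v hv]

theorem FireSeq.exists_filter_not_reaches {x : α} {M Mf M' : α → ℕ} {σ : List α}
    (h : N.FireSeq M σ Mf) (c : α → ℕ) (hM' : ∀ p, ¬ N.Reaches x p → M p + c p ≤ M' p) :
    ∃ σ' Mf', N.FireSeq M' σ' Mf' ∧ (∀ u ∈ σ', ¬ N.Reaches x u) ∧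
      ∀ p, ¬ N.Reaches x p → Mf p + c p ≤ Mf' p := by
  induction h generalizing M' with
  | nil => exact ⟨[], M', .nil M', by simp, hM'⟩
  | @cons M M₁ _ t _ hstep _ ih =>
    obtain ⟨hen, rfl⟩ := hstep
    by_cases hxt : N.Reaches x t
    · refine ih fun p hp => le_trans ?_ (hM' p hp)
      have hpost : p ∉ N.postset t := fun h => hp (hxt.tail (mem_postset.1 h))
      simp only [fire, hpost, if_false]
      omega
    · have hpre : ∀ p ∈ N.preset t, ¬ N.Reaches x p := fun p hp hxp =>
        hxt (hxp.tail (mem_preset.1 hp))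
      have hen' : N.Enabled M' t :=
        hen.mono fun p hp => le_trans (Nat.le_add_right _ _) (hM' p (hpre p hp))
      obtain ⟨σ', Mf', hσ', hnr, hle⟩ := ih (M' := N.fire M' t) fun p hp => by
        have := hM' p hp
        by_cases hp' : p ∈ N.preset t
        · have := hen.2 p hp'
          simp only [fire, hp', if_true]
          split_ifs <;> omega
        · simp only [fire, hp', if_false]
          split_ifs <;> omega
      refine ⟨t :: σ', Mf', .cons ⟨hen', rfl⟩ hσ', ?_, hle⟩
      rintro u (_ | ⟨_, hu⟩)
      exacts [hxt, hnr u hu]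

theorem Active.mem_nodes {M : α → ℕ} {x : α} (h : N.Active x M) : x ∈ N.nodes := by
  rcases h with ⟨hx, _⟩ | ⟨hx, _⟩ <;> simp [nodes, hx]

theorem Active.pos {M : α → ℕ} {x : α} (h : N.Active x M) (hx : x ∈ N.places) : 1 ≤ M x := by
  rcases h with ⟨_, h⟩ | ⟨hx', _⟩
  exacts [h, absurd hx' (notMem_transitions_of_mem_places hx)]

theorem Active.enabled {M : α → ℕ} {x : α} (h : N.Active x M) (hx : x ∈ N.transitions) :
    N.Enabled M x := by
  rcases h with ⟨hx', _⟩ | ⟨_, h⟩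
  exacts [absurd hx (notMem_transitions_of_mem_places hx'), h]

section Concurrency

variable {M₀ : α → ℕ}

theorem concStep_mono {R S : Set (α × α)} (h : R ⊆ S) :
    N.concStep M₀ R ⊆ N.concStep M₀ S :=
  fun _ ⟨hne, hact, h₁, h₂, h₃⟩ => ⟨hne, hact, fun ha hb z hz => h (h₁ ha hb z hz),
    fun ha hb z hz => h (h₂ ha hb z hz), fun ha hb z hz z' hz' => h (h₃ ha hb z hz z' hz')⟩

theorem mem_concStep_of_mem_concurrent {q : α × α} (hq : q ∈ N.Concurrent M₀) :
    q ∈ N.concStep M₀ (N.Concurrent M₀) := by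
  obtain ⟨R, hR, hqR⟩ := hq
  exact concStep_mono (Set.subset_sUnion_of_mem hR) (hR hqR)

theorem mem_concurrent_of_subset_concStep {R : Set (α × α)} (hR : R ⊆ N.concStep M₀ R)
    {q : α × α} (hq : q ∈ R) : q ∈ N.Concurrent M₀ :=
  ⟨R, hR, hq⟩

theorem ne_of_mem_concurrent {x y : α} (h : (x, y) ∈ N.Concurrent M₀) : x ≠ y :=
  (mem_concStep_of_mem_concurrent h).1

theorem exists_active_of_mem_concurrent {x y : α} (h : (x, y) ∈ N.Concurrent M₀) :
    ∃ M, N.Reachable M₀ M ∧ N.Active x M ∧ N.Active y M :=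
  (mem_concStep_of_mem_concurrent h).2.1

theorem mem_concurrent_symm {x y : α} (h : (x, y) ∈ N.Concurrent M₀) :
    (y, x) ∈ N.Concurrent M₀ := by
  obtain ⟨R, hR, hxy⟩ := h
  refine mem_concurrent_of_subset_concStep (R := R ∪ {q | q.swap ∈ R}) ?_ (Or.inr hxy)
  rintro ⟨u, v⟩ (huv | huv)
  · exact concStep_mono Set.subset_union_left (hR huv)
  · obtain ⟨hne, ⟨M, hM, hu, hv⟩, h₁, h₂, h₃⟩ := hR huv
    exact ⟨hne.symm, ⟨M, hM, hv, hu⟩, fun hv hu z hz => Or.inl (h₂ hu hv z hz),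
      fun hv hu z hz => Or.inl (h₁ hu hv z hz),
      fun hv hu z hz z' hz' => Or.inr (h₃ hu hv z' hz' z hz)⟩

theorem mem_concurrent_preset_left {x y z : α} (h : (x, y) ∈ N.Concurrent M₀)
    (hx : x ∈ N.transitions) (hy : y ∈ N.places) (hz : z ∈ N.preset x) :
    (z, y) ∈ N.Concurrent M₀ :=
  (mem_concStep_of_mem_concurrent h).2.2.1 hx hy z hz

theorem mem_concurrent_preset_right {x y z : α} (h : (x, y) ∈ N.Concurrent M₀)
    (hx : x ∈ N.places) (hy : y ∈ N.transitions) (hz : z ∈ N.preset y) :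
    (x, z) ∈ N.Concurrent M₀ :=
  mem_concurrent_symm ((mem_concStep_of_mem_concurrent h).2.2.2.1 hx hy z hz)

theorem mem_concurrent_preset_preset {x y z z' : α} (h : (x, y) ∈ N.Concurrent M₀)
    (hx : x ∈ N.transitions) (hy : y ∈ N.transitions) (hz : z ∈ N.preset x)
    (hz' : z' ∈ N.preset y) : (z, z') ∈ N.Concurrent M₀ :=
  (mem_concStep_of_mem_concurrent h).2.2.2.2 hx hy z hz z' hz'

theorem mem_concurrent_of_pos {M : α → ℕ} {p q : α} (hM : N.Reachable M₀ M)
    (hp : p ∈ N.places) (hq : q ∈ N.places) (hMp : 1 ≤ M p) (hMq : 1 ≤ M q) (hne : p ≠ q) :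
    (p, q) ∈ N.Concurrent M₀ := by
  refine mem_concurrent_of_subset_concStep (R := {(p, q)}) ?_ rfl
  rintro _ rfl
  exact ⟨hne, ⟨M, hM, Or.inl ⟨hp, hMp⟩, Or.inl ⟨hq, hMq⟩⟩,
    fun hpT => absurd hpT (notMem_transitions_of_mem_places hp),
    fun _ hqT => absurd hqT (notMem_transitions_of_mem_places hq),
    fun hpT => absurd hpT (notMem_transitions_of_mem_places hp)⟩

theorem mem_concurrent_of_active {M : α → ℕ} {x s : α} (hM : N.Reachable M₀ M)
    (hx : N.Active x M) (hs : N.Active s M) (hne : x ≠ s)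
    (h₁ : x ∈ N.transitions → s ∈ N.places → ∀ z ∈ N.preset x, z ≠ s)
    (h₂ : x ∈ N.places → s ∈ N.transitions → ∀ z ∈ N.preset s, z ≠ x)
    (h₃ : x ∈ N.transitions → s ∈ N.transitions →
      ∀ z ∈ N.preset x, ∀ z' ∈ N.preset s, z ≠ z') :
    (x, s) ∈ N.Concurrent M₀ := by
  have hpre : ∀ {t}, N.Active t M → t ∈ N.transitions → ∀ z ∈ N.preset t,
      z ∈ N.places ∧ 1 ≤ M z := fun ht htT z hz =>
    ⟨flow_source_mem_places (mem_preset.1 hz) htT, (ht.enabled htT).2 z hz⟩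
  refine mem_concurrent_of_subset_concStep (R := insert (x, s) (N.Concurrent M₀)) ?_
    (Set.mem_insert _ _)
  rintro q (rfl | hq)
  · refine ⟨hne, ⟨M, hM, hx, hs⟩, ?_, ?_, ?_⟩
    · intro hxT hsP z hz
      obtain ⟨hzP, hMz⟩ := hpre hx hxT z hz
      exact Or.inr (mem_concurrent_of_pos hM hzP hsP hMz (hs.pos hsP) (h₁ hxT hsP z hz))
    · intro hxP hsT z hz
      obtain ⟨hzP, hMz⟩ := hpre hs hsT z hz
      exact Or.inr (mem_concurrent_of_pos hM hzP hxP hMz (hx.pos hxP) (h₂ hxP hsT z hz))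
    · intro hxT hsT z hz z' hz'
      obtain ⟨hzP, hMz⟩ := hpre hx hxT z hz
      obtain ⟨hz'P, hMz'⟩ := hpre hs hsT z' hz'
      exact Or.inr (mem_concurrent_of_pos hM hzP hz'P hMz hMz' (h₃ hxT hsT z hz z' hz'))
  · exact concStep_mono (Set.subset_insert _ _) (mem_concStep_of_mem_concurrent hq)

theorem notMem_preset_of_mem_concurrent {x y : α} (h : (x, y) ∈ N.Concurrent M₀)
    (hy : y ∈ N.places) : y ∉ N.preset x := by
  intro hyx
  have hxT := flow_target_mem_transitions (mem_preset.1 hyx) hy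
  exact ne_of_mem_concurrent (mem_concurrent_preset_left h hxT hy hyx) rfl

theorem Active.fire_of_mem_concurrent {M : α → ℕ} {x y : α} (h : (x, y) ∈ N.Concurrent M₀)
    (hx : N.Active x M) (hy : N.Enabled M y) : N.Active x (N.fire M y) := by
  rcases hx with ⟨hxP, hMx⟩ | ⟨hxT, hen⟩
  · have hxy := notMem_preset_of_mem_concurrent (mem_concurrent_symm h) hxP
    exact Or.inl ⟨hxP, hMx.trans (le_fire_of_notMem_preset hxy)⟩
  · refine Or.inr ⟨hxT, hen.mono fun z hz => le_fire_of_notMem_preset fun hzy => ?_⟩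
    exact ne_of_mem_concurrent (mem_concurrent_preset_preset h hxT hy.1 hz hzy) rfl

end Concurrency

def ConeHoldsOneToken (N : PetriNet α) (M₀ : α → ℕ) (p : α) : Prop :=
  ∀ M, N.Reachable M₀ M → 1 ≤ M p → M p ≤ 1 ∧ ∀ q, N.Reaches p q → 1 ≤ M q → q = p

end PetriNet

namespace WorkflowNet

open PetriNet

variable {α : Type} [DecidableEq α] {W : WorkflowNet α}

theorem mem_places_of_reachable {M : α → ℕ} (hM : W.Reachable W.initialMarking M) {p : α}
    (hp : 1 ≤ M p) : p ∈ W.places := by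
  refine hM.mem_places_of_pos (fun q hq => ?_) hp
  have : q ≠ W.source := fun h => hq (h ▸ W.source_mem)
  simp [initialMarking, this]

theorem ne_sink_of_mem_postset {p t : α} (ht : t ∈ W.postset p) : p ≠ W.sink := by
  rintro rfl
  simp [W.sink_no_post] at ht

theorem exists_mem_postset {n : α} (hn : n ∈ W.nodes) (hne : n ≠ W.sink) :
    ∃ r, r ∈ W.postset n := by
  obtain ⟨w, ⟨-, -, hchain⟩, -, hlast, hmem⟩ := W.all_on_path n hn
  obtain ⟨w₁, w₂, rfl⟩ := List.append_of_mem hmem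
  cases w₂ with
  | nil => exact absurd (by simpa using hlast) hne
  | cons r _ =>
    exact ⟨r, mem_postset.2 (List.isChain_cons_cons.1 (hchain.suffix ⟨w₁, rfl⟩)).1⟩

theorem exists_mem_preset {n : α} (hn : n ∈ W.nodes) (hne : n ≠ W.source) :
    ∃ z, z ∈ W.preset n := by
  obtain ⟨w, ⟨-, -, hchain⟩, hhead, -, hmem⟩ := W.all_on_path n hn
  obtain ⟨w₁, w₂, rfl⟩ := List.append_of_mem hmem
  obtain ⟨w₁', z, rfl⟩ := (List.eq_nil_or_concat w₁).resolve_left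
    (by rintro rfl; exact hne (by simpa using hhead))
  exact ⟨z, mem_preset.2 (List.isChain_pair.1 (hchain.infix ⟨w₁', w₂, by simp⟩))⟩

theorem Sound.eq_terminalMarking (hsound : W.Sound) {M : α → ℕ}
    (hM : W.Reachable W.initialMarking M) (hsink : 1 ≤ M W.sink) : M = W.terminalMarking :=
  (hsound.1 M hM).2 hsink

/-- A run to the terminal marking must consume the token on `y`, and only `s` can do it. -/
theorem Sound.exists_fireSeq_enabled (hsound : W.Sound) {M : α → ℕ} {y s : α}
    (hM : W.Reachable W.initialMarking M) (hy : 1 ≤ M y) (hs : s ∈ W.postset y)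
    (huniq : ∀ u ∈ W.postset y, u = s) :
    ∃ σ Ma, W.FireSeq M σ Ma ∧ (∀ u ∈ σ, y ∉ W.preset u) ∧ W.Enabled Ma s := by
  obtain ⟨σ, hσ⟩ := (hsound.1 M hM).1.exists_fireSeq
  have hterm : W.terminalMarking y < M y := by
    simp only [terminalMarking, if_neg (ne_sink_of_mem_postset hs)]
    omega
  obtain ⟨σ₁, Ma, t, hσ₁, hnc, hyt, hen⟩ := hσ.exists_prefix_enabled_consumer hterm
  obtain rfl := huniq t (mem_postset.2 (mem_preset.1 hyt))
  exact ⟨σ₁, Ma, hσ₁, hnc, hen⟩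

theorem Sound.exists_enabled_of_dominates (hsound : W.Sound) {M M₁ : α → ℕ} {x y s : α}
    (c : α → ℕ) (hM₁ : W.Reachable W.initialMarking M₁) (hy : 1 ≤ M₁ y)
    (hs : s ∈ W.postset y) (huniq : ∀ u ∈ W.postset y, u = s) (hxs : ¬ W.Reaches x s)
    (hle : ∀ p, ¬ W.Reaches x p → M₁ p + c p ≤ M p) :
    ∃ M', W.Reachable M M' ∧ M x ≤ M' x ∧ (∀ p, ¬ W.Reaches x p → c p ≤ M' p) ∧
      W.Enabled M' s := by
  obtain ⟨σ, Ma, hσ, -, hen⟩ := hsound.exists_fireSeq_enabled hM₁ hy hs huniq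
  obtain ⟨σ', M', hσ', hnr, hle'⟩ := hσ.exists_filter_not_reaches c hle
  have hxσ' : ∀ u ∈ σ', x ∉ W.preset u := fun u hu hxu => hnr u hu (.single (mem_preset.1 hxu))
  have hpre : ∀ p ∈ W.preset s, ¬ W.Reaches x p := fun p hp hxp =>
    hxs (hxp.tail (mem_preset.1 hp))
  refine ⟨M', hσ'.reachable, hσ'.le_of_forall_notMem_preset hxσ',
    fun p hp => (Nat.le_add_left _ _).trans (hle' p hp), ?_⟩
  exact hen.mono fun p hp => (Nat.le_add_right _ _).trans (hle' p (hpre p hp))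

theorem Sound.exists_active_enabled (hacyc : W.Acyclic) (hsound : W.Sound) {M : α → ℕ}
    {x y s : α} (hM : W.Reachable W.initialMarking M) (hx : W.Active x M) (hy : 1 ≤ M y)
    (hyx : y ∉ W.preset x) (hs : s ∈ W.postset y) (huniq : ∀ u ∈ W.postset y, u = s)
    (hxs : ¬ W.Reaches x s) :
    ∃ M', W.Reachable W.initialMarking M' ∧ W.Active x M' ∧ W.Enabled M' s := by
  rcases hx with ⟨hxP, hMx⟩ | ⟨hxT, hen⟩
  · obtain ⟨M', hM', hMx', -, hs'⟩ :=
      hsound.exists_enabled_of_dominates 0 hM hy hs huniq hxs fun p _ => le_rfl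
    exact ⟨M', hM.trans hM', Or.inl ⟨hxP, hMx.trans hMx'⟩, hs'⟩
  · -- fire `x` first, and replay the run from `M` keeping a token on each input place of `x`
    let c : α → ℕ := fun p => if p ∈ W.preset x then 1 else 0
    have hle : ∀ p, ¬ W.Reaches x p → W.fire M x p + c p ≤ M p := by
      intro p hp
      have hpost : p ∉ W.postset x := fun h => hp (.single (mem_postset.1 h))
      by_cases hpx : p ∈ W.preset x
      · have := hen.2 p hpx
        simp only [fire, c, hpx, hpost, if_true, if_false]
        omega
      · simp [fire, c, hpx, hpost]
    obtain ⟨M', hM', -, hc, hs'⟩ := hsound.exists_enabled_of_dominates c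
      (hM.tail ⟨x, hen, rfl⟩) ((le_fire_of_notMem_preset hyx).trans' hy) hs huniq hxs hle
    refine ⟨M', hM.trans hM', Or.inr ⟨hxT, hxT, fun z hz => ?_⟩, hs'⟩
    have := hc z (hacyc.not_reaches_of_flow (mem_preset.1 hz))
    simpa [c, hz] using this

theorem Sound.eq_of_reaches_of_pos (hfc : W.FreeChoice) (hacyc : W.Acyclic) (hsound : W.Sound)
    {p : α} (ih : ∀ r, W.Reaches p r → r ≠ p → W.ConeHoldsOneToken W.initialMarking r)
    {M : α → ℕ} (hM : W.Reachable W.initialMarking M) (hp : 1 ≤ M p) {q : α}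
    (hpq : W.Reaches p q) (hq : 1 ≤ M q) : q = p := by
  by_contra hqp
  have hpP := mem_places_of_reachable hM hp
  have hqP := mem_places_of_reachable hM hq
  obtain ⟨t, hpt, htq⟩ := hpq.cases_head.resolve_left (Ne.symm hqp)
  have htT := flow_target_mem_transitions hpt hpP
  have htq_ne : t ≠ q := fun h => notMem_transitions_of_mem_places hqP (h ▸ htT)
  obtain ⟨r, htr, hrq⟩ := htq.cases_head.resolve_left htq_ne
  have hqt : ¬ W.Reaches q t := fun h => htq_ne (hacyc.reaches_antisymm htq h)
  obtain ⟨Ma, hMa, hMat, hMaq⟩ :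
      ∃ Ma, W.Reachable W.initialMarking Ma ∧ W.Enabled Ma t ∧ 1 ≤ Ma q := by
    rcases hfc.preset_eq_or_postset_unique hpP (mem_postset.2 hpt) with hpre | huniq
    · exact ⟨M, hM, enabled_of_preset_eq_singleton htT hpre hp, hq⟩
    · have hpq' : p ∉ W.preset q := fun h =>
        notMem_transitions_of_mem_places hqP (flow_target_mem_transitions (mem_preset.1 h) hpP)
      obtain ⟨Ma, hMa, hq', hen⟩ := hsound.exists_active_enabled hacyc hM (Or.inl ⟨hqP, hq⟩) hp
        hpq' (mem_postset.2 hpt) huniq hqt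
      exact ⟨Ma, hMa, hen, hq'.pos hqP⟩
  have hM₁ : W.Reachable W.initialMarking (W.fire Ma t) := hMa.tail ⟨t, hMat, rfl⟩
  have hM₁r : W.fire Ma t r = Ma r + 1 :=
    fire_of_mem_postset (fun h => hacyc.not_reaches_of_flow (mem_preset.1 h) (.single htr))
      (mem_postset.2 htr)
  have hM₁q : Ma q ≤ W.fire Ma t q :=
    le_fire_of_notMem_preset fun h => hqt (.single (mem_preset.1 h))
  have hrp : r ≠ p := fun h => hacyc.not_reaches_of_flow hpt (.single (h ▸ htr))
  obtain ⟨hr₁, hr⟩ := ih r (.head hpt (.single htr)) hrp _ hM₁ (by omega)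
  obtain rfl := hr q hrq (by omega)
  omega

theorem Sound.le_one_of_reachable (hfc : W.FreeChoice) (hacyc : W.Acyclic) (hsound : W.Sound)
    {p : α} (hpair : ∀ M, W.Reachable W.initialMarking M → 1 ≤ M p →
      ∀ q, W.Reaches p q → 1 ≤ M q → q = p)
    {M : α → ℕ} (hM : W.Reachable W.initialMarking M) : M p ≤ 1 := by
  by_contra! h2
  have hpP := mem_places_of_reachable hM (by omega : 1 ≤ M p)
  have hpsink : p ≠ W.sink := by
    rintro rfl
    have := hsound.eq_terminalMarking hM (by omega)
    simp [this, terminalMarking] at h2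
  obtain ⟨t, ht⟩ := exists_mem_postset (by simp [nodes, hpP]) hpsink
  have htT := flow_target_mem_transitions (mem_postset.1 ht) hpP
  obtain ⟨Ma, hMa, hMat, hMap⟩ :
      ∃ Ma, W.Reachable W.initialMarking Ma ∧ W.Enabled Ma t ∧ 2 ≤ Ma p := by
    rcases hfc.preset_eq_or_postset_unique hpP ht with hpre | huniq
    · exact ⟨M, hM, enabled_of_preset_eq_singleton htT hpre (by omega), h2⟩
    · obtain ⟨σ, Ma, hσ, hnc, hen⟩ := hsound.exists_fireSeq_enabled hM (by omega) ht huniq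
      exact ⟨Ma, hM.trans hσ.reachable, hen, h2.trans_le (hσ.le_of_forall_notMem_preset hnc)⟩
  obtain ⟨r, hr⟩ := exists_mem_postset (n := t) (by simp [nodes, htT])
    fun h => notMem_transitions_of_mem_places W.sink_mem (h ▸ htT)
  have hM₁ : W.Reachable W.initialMarking (W.fire Ma t) := hMa.tail ⟨t, hMat, rfl⟩
  have hpt : p ∈ W.preset t := mem_preset.2 (mem_postset.1 ht)
  have hM₁p : W.fire Ma t p = Ma p - 1 :=
    fire_of_mem_preset hpt (hacyc.notMem_postset_of_mem_preset hpt)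
  have hM₁r : W.fire Ma t r = Ma r + 1 :=
    fire_of_mem_postset (fun h => hacyc.notMem_postset_of_mem_preset h hr) hr
  have hrp : r ≠ p := fun h => hacyc.notMem_postset_of_mem_preset hpt (h ▸ hr)
  exact hrp (hpair _ hM₁ (by omega) r (.head (mem_postset.1 ht) (.single (mem_postset.1 hr)))
    (by omega))

theorem Sound.coneHoldsOneToken (hfc : W.FreeChoice) (hacyc : W.Acyclic) (hsound : W.Sound)
    (p : α) : W.ConeHoldsOneToken W.initialMarking p := by
  induction p using hacyc.induction with
  | step p ih =>
  have hpair : ∀ M, W.Reachable W.initialMarking M → 1 ≤ M p →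
      ∀ q, W.Reaches p q → 1 ≤ M q → q = p :=
    fun M hM hp q hpq hq => hsound.eq_of_reaches_of_pos hfc hacyc ih hM hp hpq hq
  exact fun M hM hp => ⟨hsound.le_one_of_reachable hfc hacyc hpair hM, hpair M hM hp⟩

theorem Sound.not_reaches_of_pos (hfc : W.FreeChoice) (hacyc : W.Acyclic) (hsound : W.Sound)
    {M : α → ℕ} (hM : W.Reachable W.initialMarking M) {p q : α} (hp : 1 ≤ M p)
    (hq : 1 ≤ M q) (hne : p ≠ q) : ¬ W.Reaches p q :=
  fun hpq => hne ((hsound.coneHoldsOneToken hfc hacyc p M hM hp).2 q hpq hq).symm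

theorem Sound.not_reaches_of_mem_concurrent (hfc : W.FreeChoice) (hacyc : W.Acyclic)
    (hsound : W.Sound) {a b : α} (h : (a, b) ∈ W.Concurrent W.initialMarking) :
    ¬ W.Reaches a b := by
  have of_places : ∀ {p q}, (p, q) ∈ W.Concurrent W.initialMarking → p ∈ W.places →
      q ∈ W.places → ¬ W.Reaches p q := fun hpq hp hq => by
    obtain ⟨M, hM, hpM, hqM⟩ := exists_active_of_mem_concurrent hpq
    exact hsound.not_reaches_of_pos hfc hacyc hM (hpM.pos hp) (hqM.pos hq)
      (ne_of_mem_concurrent hpq)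
  have input_place : ∀ {t}, t ∈ W.transitions → ∃ z ∈ W.preset t, z ∈ W.places := fun ht => by
    obtain ⟨z, hz⟩ := exists_mem_preset (by simp [nodes, ht])
      fun h => notMem_transitions_of_mem_places W.source_mem (h ▸ ht)
    exact ⟨z, hz, flow_source_mem_places (mem_preset.1 hz) ht⟩
  intro hab
  obtain ⟨M, -, ha, hb⟩ := exists_active_of_mem_concurrent h
  rcases Finset.mem_union.1 ha.mem_nodes with haP | haT
  · rcases Finset.mem_union.1 hb.mem_nodes with hbP | hbT
    · exact of_places h haP hbP hab
    · obtain ⟨w, haw, hwb⟩ := hab.cases_tail.resolve_left (ne_of_mem_concurrent h).symm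
      exact of_places (mem_concurrent_preset_right h haP hbT (mem_preset.2 hwb)) haP
        (flow_source_mem_places hwb hbT) haw
  · obtain ⟨z, hz, hzP⟩ := input_place haT
    rcases Finset.mem_union.1 hb.mem_nodes with hbP | hbT
    · exact of_places (mem_concurrent_preset_left h haT hbP hz) hzP hbP
        (.head (mem_preset.1 hz) hab)
    · obtain ⟨w, haw, hwb⟩ := hab.cases_tail.resolve_left (ne_of_mem_concurrent h).symm
      exact of_places (mem_concurrent_preset_preset h haT hbT hz (mem_preset.2 hwb)) hzP
        (flow_source_mem_places hwb hbT) (.head (mem_preset.1 hz) haw)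

theorem Sound.mem_concurrent_of_mem_postset_of_mem_places (hfc : W.FreeChoice)
    (hacyc : W.Acyclic) (hsound : W.Sound) {x y s : α}
    (hxy : (x, y) ∈ W.Concurrent W.initialMarking) (hyP : y ∈ W.places)
    (hs : s ∈ W.postset y) (hxs : ¬ W.Reaches x s) :
    (x, s) ∈ W.Concurrent W.initialMarking := by
  obtain ⟨M, hM, hx, hy⟩ := exists_active_of_mem_concurrent hxy
  have hsT := flow_target_mem_transitions (mem_postset.1 hs) hyP
  have hyx := notMem_preset_of_mem_concurrent hxy hyP
  have hne : x ≠ s := fun h => hxs (h ▸ .refl)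
  obtain ⟨M', hM', hx', hs'⟩ :
      ∃ M', W.Reachable W.initialMarking M' ∧ W.Active x M' ∧ W.Enabled M' s := by
    rcases hfc.preset_eq_or_postset_unique hyP hs with hpre | huniq
    · exact ⟨M, hM, hx, enabled_of_preset_eq_singleton hsT hpre (hy.pos hyP)⟩
    · exact hsound.exists_active_enabled hacyc hM hx (hy.pos hyP) hyx hs huniq hxs
  refine mem_concurrent_of_active hM' hx' (Or.inr ⟨hsT, hs'⟩) hne
    (fun _ hsP => absurd hsT (notMem_transitions_of_mem_places hsP))
    (fun _ _ z hz hzx => hxs (.single (mem_preset.1 (hzx ▸ hz)))) ?_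
  -- a common input place `z` of `x` and `s` would be `y` by free choice, but `y ∉ •x`
  rintro hxT - z hz _ hz' rfl
  have hzP := flow_source_mem_places (mem_preset.1 hz) hxT
  rcases hfc.preset_eq_or_postset_unique hzP (mem_postset.2 (mem_preset.1 hz')) with hpre | huniq
  · have hy : y ∈ W.preset s := mem_preset.2 (mem_postset.1 hs)
    rw [hpre, Finset.mem_singleton] at hy
    exact hyx (hy ▸ hz)
  · exact hne (huniq x (mem_postset.2 (mem_preset.1 hz)))

theorem Sound.mem_concurrent_of_mem_postset_of_mem_transitions (hfc : W.FreeChoice)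
    (hacyc : W.Acyclic) (hsound : W.Sound) {x y s : α}
    (hxy : (x, y) ∈ W.Concurrent W.initialMarking) (hyT : y ∈ W.transitions)
    (hs : s ∈ W.postset y) (hne : x ≠ s) :
    (x, s) ∈ W.Concurrent W.initialMarking := by
  obtain ⟨M, hM, hx, hy⟩ := exists_active_of_mem_concurrent hxy
  have hsP := flow_target_mem_places (mem_postset.1 hs) hyT
  have hMs : W.fire M y s = M s + 1 :=
    fire_of_mem_postset (fun h => hacyc.notMem_postset_of_mem_preset h hs) hs
  refine mem_concurrent_of_active (hM.tail ⟨y, hy.enabled hyT, rfl⟩)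
    (hx.fire_of_mem_concurrent hxy (hy.enabled hyT)) (Or.inl ⟨hsP, by omega⟩) hne ?_
    (fun _ hsT => absurd hsT (notMem_transitions_of_mem_places hsP))
    (fun _ hsT => absurd hsT (notMem_transitions_of_mem_places hsP))
  rintro - - z hz rfl
  exact hsound.not_reaches_of_mem_concurrent hfc hacyc (mem_concurrent_symm hxy)
    (.head (mem_postset.1 hs) (.single (mem_preset.1 hz)))

end WorkflowNet

/-- In a sound acyclic free-choice workflow net: for every concurrent pair `(x,y)` and
every node `s ∈ y•`, there is no acyclic path from `x` to `s` iff `x` and `s`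
are concurrent. -/
theorem postset_no_path_iff_concurrent {α : Type} [DecidableEq α] (W : WorkflowNet α)
    (hfc : W.toPetriNet.FreeChoice) (hacyc : W.toPetriNet.Acyclic) (hsound : W.Sound) :
    ∀ x y : α, (x, y) ∈ W.toPetriNet.Concurrent W.initialMarking →
      ∀ s ∈ W.toPetriNet.postset y,
        (¬ W.toPetriNet.HasAcyclicPath x s ↔
          (x, s) ∈ W.toPetriNet.Concurrent W.initialMarking) := by
  intro x y hxy s hs
  obtain ⟨M, -, hx, hy⟩ := PetriNet.exists_active_of_mem_concurrent hxy
  rw [PetriNet.hasAcyclicPath_iff_reaches hx.mem_nodes]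
  refine ⟨fun hxs => ?_, hsound.not_reaches_of_mem_concurrent hfc hacyc⟩
  rcases Finset.mem_union.1 hy.mem_nodes with hyP | hyT
  · exact hsound.mem_concurrent_of_mem_postset_of_mem_places hfc hacyc hxy hyP hs hxs
  · exact hsound.mem_concurrent_of_mem_postset_of_mem_transitions hfc hacyc hxy hyT hs
      fun h => hxs (h ▸ .refl)
end

section
/- Let N = (P,T,F) be a live and bounded free-choice net with initial marking M_0. For all distinct places x, y ∈ P with M_0(x) ≥ 1 and M_0(y) ≥ 1, the pair (x,y) is in the concurrency relation ∥. -/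
/-- In a live and bounded free-choice net, all distinct places carrying a token in the
initial marking are pairwise concurrent. -/
theorem initially_marked_places_concurrent {α : Type} [DecidableEq α]
    (N : PetriNet α) (M₀ : α → ℕ)
    (hlive : N.Live M₀) (hbdd : N.Bounded M₀) (hfc : N.FreeChoice) :
    ∀ x ∈ N.places, ∀ y ∈ N.places, x ≠ y → 1 ≤ M₀ x → 1 ≤ M₀ y →
      (x, y) ∈ N.Concurrent M₀ := by
  intro x hx y hy hxy hMx hMy
  refine Set.mem_sUnion.2 ⟨{(x, y)}, ?_, rfl⟩
  intro q hq
  rcases hq with rfl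
  have hxt : x ∉ N.transitions := fun h => (Finset.disjoint_left.1 N.disjoint_pt hx) h
  refine ⟨hxy, ⟨M₀, Relation.ReflTransGen.refl, Or.inl ⟨hx, hMx⟩, Or.inl ⟨hy, hMy⟩⟩,
    fun h => absurd h hxt, fun _ h => absurd h
      (fun h' => (Finset.disjoint_left.1 N.disjoint_pt hy) h'),
    fun h => absurd h hxt⟩
end
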